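/- arXiv:0906.2034 — 2 statements merged into one kernel-verified Lean document; each statement's English description precedes it below -/
import Mathlib

section
/- The singular value soft-thresholding operator S_λ is non-expansive in the Frobenius norm: for any two m×n matrices W₁, W₂ and any λ ≥ 0, ‖S_λ(W₁) − S_λ(W₂)‖_F² ≤ ‖W₁ − W₂‖_F². -/
open Matrix BigOperators Finset

noncomputable section

/-- Squared Frobenius norm of a real matrix. -/
def frobSq {m n : ℕ} (A : Matrix (Fin m) (Fin n) ℝ) : ℝ :=
  ∑ i, ∑ j, (A i j) ^ 2

/-- Frobenius norm. -/
def frobNorm {m n : ℕ} (A : Matrix (Fin m) (Fin n) ℝ) : ℝ :=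
  Real.sqrt (frobSq A)

/-- The singular values of `A`, as square roots of the eigenvalues of `Aᴴ * A`. -/
def singVals {m n : ℕ} (A : Matrix (Fin m) (Fin n) ℝ) : Fin n → ℝ :=
  fun i => Real.sqrt ((Matrix.isHermitian_conjTranspose_mul_self A).eigenvalues i)

/-- Nuclear norm: the sum of the singular values. -/
def nnorm {m n : ℕ} (A : Matrix (Fin m) (Fin n) ℝ) : ℝ :=
  ∑ i, singVals A i

/-- Spectral norm: the largest singular value. -/
def specNorm {m n : ℕ} (A : Matrix (Fin m) (Fin n) ℝ) : ℝ :=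
  ⨆ i, singVals A i

/-- Projection onto the observed entries `Ω`. -/
def pO {m n : ℕ} (Ω : Finset (Fin m × Fin n)) (Y : Matrix (Fin m) (Fin n) ℝ) :
    Matrix (Fin m) (Fin n) ℝ :=
  fun i j => if (i, j) ∈ Ω then Y i j else 0

/-- Complementary projection `P_Ω^⊥ = I - P_Ω`. -/
def pOc {m n : ℕ} (Ω : Finset (Fin m × Fin n)) (Y : Matrix (Fin m) (Fin n) ℝ) :
    Matrix (Fin m) (Fin n) ℝ :=
  Y - pO Ω Y

/-- The objective `f_λ(Z) = ½‖P_Ω(Z) - P_Ω(X)‖_F² + λ‖Z‖_*`. -/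
def fObj {m n : ℕ} (Ω : Finset (Fin m × Fin n)) (X : Matrix (Fin m) (Fin n) ℝ) (lam : ℝ)
    (Z : Matrix (Fin m) (Fin n) ℝ) : ℝ :=
  (1 / 2) * frobSq (pO Ω Z - pO Ω X) + lam * nnorm Z

/-- The surrogate `Q_λ(Z | Z̃) = ½‖P_Ω(X) + P_Ω^⊥(Z̃) - Z‖_F² + λ‖Z‖_*`. -/
def qObj {m n : ℕ} (Ω : Finset (Fin m × Fin n)) (X : Matrix (Fin m) (Fin n) ℝ) (lam : ℝ)
    (Z Zt : Matrix (Fin m) (Fin n) ℝ) : ℝ :=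
  (1 / 2) * frobSq (pO Ω X + pOc Ω Zt - Z) + lam * nnorm Z

/-- `IsSVD W U d V` : `W = U D Vᵀ` is a thin SVD of `W` with strictly positive
singular values `d` and orthonormal columns in `U` and `V`. -/
def IsSVD {m n r : ℕ} (W : Matrix (Fin m) (Fin n) ℝ) (U : Matrix (Fin m) (Fin r) ℝ)
    (d : Fin r → ℝ) (V : Matrix (Fin n) (Fin r) ℝ) : Prop :=
  Uᵀ * U = 1 ∧ Vᵀ * V = 1 ∧ (∀ i, 0 < d i) ∧ W = U * Matrix.diagonal d * Vᵀ

/-- Trace inner product `⟨A, B⟩ = tr(AᵀB)`. -/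
def minner {m n : ℕ} (A B : Matrix (Fin m) (Fin n) ℝ) : ℝ :=
  ∑ i, ∑ j, A i j * B i j

/-- `G` is a subgradient of the nuclear norm at `Z`. -/
def NucSubgrad {m n : ℕ} (Z G : Matrix (Fin m) (Fin n) ℝ) : Prop :=
  ∀ Y, nnorm Z + minner G (Y - Z) ≤ nnorm Y

end

/-! Write `P = (U₁ᵀ U₂) ⊙ (V₁ᵀ V₂)`. For thin SVDs with orthonormal columns,
`‖U₁ diag x V₁ᵀ - U₂ diag y V₂ᵀ‖_F² = ∑ xᵢ² + ∑ yⱼ² - 2 ∑ xᵢ yⱼ Pᵢⱼ`, and by Bessel's inequality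
and AM–GM every row and every column of `|P|` sums to at most `1`. Shrinking the singular values
by a 1-Lipschitz `g` with `0 ≤ g t ≤ t` lowers each coefficient `xᵢ yⱼ` by some `cᵢⱼ ≥ 0` with
`2 cᵢⱼ ≤ (xᵢ² - g(xᵢ)²) + (yⱼ² - g(yⱼ)²)`, so the cross term loses at most what the diagonal
terms lose. Soft-thresholding is such a `g`. -/

section Bessel

variable {ι κ κ' : Type*} [Fintype ι] [DecidableEq κ]

theorem Matrix.dotProduct_transpose_mulVec_self_le [Fintype κ] {U : Matrix ι κ ℝ}
    (hU : Uᵀ * U = 1) (u : ι → ℝ) : (Uᵀ *ᵥ u) ⬝ᵥ (Uᵀ *ᵥ u) ≤ u ⬝ᵥ u := by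
  set a := Uᵀ *ᵥ u
  have hUa : (U *ᵥ a) ⬝ᵥ u = a ⬝ᵥ a := by
    rw [dotProduct_comm, dotProduct_mulVec, ← mulVec_transpose]
  have hUaa : (U *ᵥ a) ⬝ᵥ (U *ᵥ a) = a ⬝ᵥ a := by
    rw [dotProduct_mulVec, ← vecMul_transpose, vecMul_vecMul, hU, vecMul_one]
  have hres := dotProduct_self_star_nonneg (u - U *ᵥ a)
  simp only [star_trivial, sub_dotProduct, dotProduct_sub, hUa, hUaa, dotProduct_comm u] at hres
  linarith

theorem Matrix.sum_sq_transpose_mul_apply_le_one [Fintype κ'] [DecidableEq κ']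
    {U : Matrix ι κ ℝ} {U' : Matrix ι κ' ℝ} (hU : Uᵀ * U = 1) (hU' : U'ᵀ * U' = 1) (i : κ) :
    ∑ j, (Uᵀ * U') i j ^ 2 ≤ 1 := by
  have hrow : (Uᵀ * U') i = U'ᵀ *ᵥ Uᵀ i := by
    ext j; simp [mul_apply, mulVec, dotProduct, mul_comm]
  have hii : Uᵀ i ⬝ᵥ Uᵀ i = 1 := by
    rw [← one_apply_eq (α := ℝ) i, ← hU]; rfl
  rw [← hii]
  simpa only [hrow, dotProduct, sq] using dotProduct_transpose_mulVec_self_le hU' (Uᵀ i)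

end Bessel

theorem sum_abs_mul_le_one {κ : Type*} [Fintype κ] {a b : κ → ℝ}
    (ha : ∑ j, a j ^ 2 ≤ 1) (hb : ∑ j, b j ^ 2 ≤ 1) : ∑ j, |a j * b j| ≤ 1 :=
  calc ∑ j, |a j * b j| ≤ ∑ j, (a j ^ 2 + b j ^ 2) / 2 := by
        gcongr with j
        rw [abs_mul, le_div_iff₀ two_pos, ← sq_abs (a j), ← sq_abs (b j)]
        nlinarith [two_mul_le_add_sq |a j| |b j|]
    _ = ((∑ j, a j ^ 2) + ∑ j, b j ^ 2) / 2 := by rw [← Finset.sum_div, Finset.sum_add_distrib]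
    _ ≤ 1 := by linarith

theorem two_mul_sum_mul_le_of_sum_abs_le_one {ι κ : Type*} [Fintype ι] [Fintype κ]
    {c P : ι → κ → ℝ} {e : ι → ℝ} {f : κ → ℝ} (he : ∀ i, 0 ≤ e i) (hf : ∀ j, 0 ≤ f j)
    (hc : ∀ i j, 0 ≤ c i j) (hce : ∀ i j, 2 * c i j ≤ e i + f j)
    (hrow : ∀ i, ∑ j, |P i j| ≤ 1) (hcol : ∀ j, ∑ i, |P i j| ≤ 1) :
    2 * ∑ i, ∑ j, c i j * P i j ≤ ∑ i, e i + ∑ j, f j :=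
  calc 2 * ∑ i, ∑ j, c i j * P i j ≤ ∑ i, ∑ j, (e i + f j) * |P i j| := by
        simp only [Finset.mul_sum]
        refine Finset.sum_le_sum fun i _ => Finset.sum_le_sum fun j _ => ?_
        nlinarith [hc i j, hce i j, le_abs_self (P i j), abs_nonneg (P i j)]
    _ = ∑ i, e i * ∑ j, |P i j| + ∑ j, f j * ∑ i, |P i j| := by
        simp only [add_mul, Finset.sum_add_distrib, Finset.mul_sum]
        rw [Finset.sum_comm (f := fun i j => f j * |P i j|)]
    _ ≤ ∑ i, e i + ∑ j, f j := by
        gcongr with i _ j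
        · exact mul_le_of_le_one_right (he i) (hrow i)
        · exact mul_le_of_le_one_right (hf j) (hcol j)

section Frobenius

variable {m n r₁ r₂ : ℕ}

theorem frobSq_sub (A B : Matrix (Fin m) (Fin n) ℝ) :
    frobSq (A - B) = frobSq A - 2 * minner A B + frobSq B := by
  simp only [frobSq, minner, Matrix.sub_apply, Finset.mul_sum, ← Finset.sum_sub_distrib,
    ← Finset.sum_add_distrib]
  exact Finset.sum_congr rfl fun i _ => Finset.sum_congr rfl fun j _ => by ring

theorem frobSq_eq_minner (A : Matrix (Fin m) (Fin n) ℝ) : frobSq A = minner A A := by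
  simp only [frobSq, minner, sq]

theorem minner_eq_trace (A B : Matrix (Fin m) (Fin n) ℝ) : minner A B = trace (Aᵀ * B) := by
  simp only [minner, trace, diag_apply, mul_apply, transpose_apply]
  exact Finset.sum_comm

theorem minner_svd (U₁ : Matrix (Fin m) (Fin r₁) ℝ) (x : Fin r₁ → ℝ)
    (V₁ : Matrix (Fin n) (Fin r₁) ℝ) (U₂ : Matrix (Fin m) (Fin r₂) ℝ) (y : Fin r₂ → ℝ)
    (V₂ : Matrix (Fin n) (Fin r₂) ℝ) :
    minner (U₁ * diagonal x * V₁ᵀ) (U₂ * diagonal y * V₂ᵀ) =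
      ∑ i, ∑ j, x i * y j * ((U₁ᵀ * U₂) ⊙ (V₁ᵀ * V₂)) i j :=
  calc minner (U₁ * diagonal x * V₁ᵀ) (U₂ * diagonal y * V₂ᵀ)
      = trace (diagonal x * (U₁ᵀ * U₂) * diagonal y * (V₁ᵀ * V₂)ᵀ) := by
        simp only [minner_eq_trace, transpose_mul, transpose_transpose, diagonal_transpose,
          Matrix.mul_assoc]
        rw [trace_mul_comm]
        simp only [Matrix.mul_assoc]
    _ = _ := by
        generalize U₁ᵀ * U₂ = A
        generalize V₁ᵀ * V₂ = B
        rw [trace_mul_comm, ← minner_eq_trace]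
        simp only [minner, mul_diagonal, diagonal_mul, hadamard_apply]
        exact Finset.sum_congr rfl fun i _ => Finset.sum_congr rfl fun j _ => by ring

theorem frobSq_svd {U : Matrix (Fin m) (Fin r₁) ℝ} {V : Matrix (Fin n) (Fin r₁) ℝ}
    (hU : Uᵀ * U = 1) (hV : Vᵀ * V = 1) (x : Fin r₁ → ℝ) :
    frobSq (U * diagonal x * Vᵀ) = ∑ i, x i ^ 2 := by
  rw [frobSq_eq_minner, minner_svd, hU, hV]
  simp [hadamard_apply, one_apply, sq]

theorem frobSq_svd_sub {U₁ : Matrix (Fin m) (Fin r₁) ℝ} {V₁ : Matrix (Fin n) (Fin r₁) ℝ}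
    {U₂ : Matrix (Fin m) (Fin r₂) ℝ} {V₂ : Matrix (Fin n) (Fin r₂) ℝ}
    (hU₁ : U₁ᵀ * U₁ = 1) (hV₁ : V₁ᵀ * V₁ = 1) (hU₂ : U₂ᵀ * U₂ = 1) (hV₂ : V₂ᵀ * V₂ = 1)
    (x : Fin r₁ → ℝ) (y : Fin r₂ → ℝ) :
    frobSq (U₁ * diagonal x * V₁ᵀ - U₂ * diagonal y * V₂ᵀ) =
      ∑ i, x i ^ 2 + ∑ j, y j ^ 2 - 2 * ∑ i, ∑ j, x i * y j * ((U₁ᵀ * U₂) ⊙ (V₁ᵀ * V₂)) i j := by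
  rw [frobSq_sub, frobSq_svd hU₁ hV₁, frobSq_svd hU₂ hV₂, minner_svd]
  ring

end Frobenius

theorem sum_abs_hadamard_transpose_mul_le_one {m n r₁ r₂ : ℕ}
    {U₁ : Matrix (Fin m) (Fin r₁) ℝ} {V₁ : Matrix (Fin n) (Fin r₁) ℝ}
    {U₂ : Matrix (Fin m) (Fin r₂) ℝ} {V₂ : Matrix (Fin n) (Fin r₂) ℝ}
    (hU₁ : U₁ᵀ * U₁ = 1) (hV₁ : V₁ᵀ * V₁ = 1) (hU₂ : U₂ᵀ * U₂ = 1) (hV₂ : V₂ᵀ * V₂ = 1)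
    (i : Fin r₁) : ∑ j, |((U₁ᵀ * U₂) ⊙ (V₁ᵀ * V₂)) i j| ≤ 1 :=
  sum_abs_mul_le_one (sum_sq_transpose_mul_apply_le_one hU₁ hU₂ i)
    (sum_sq_transpose_mul_apply_le_one hV₁ hV₂ i)

theorem frobSq_svd_map_sub_le {m n r₁ r₂ : ℕ}
    {U₁ : Matrix (Fin m) (Fin r₁) ℝ} {V₁ : Matrix (Fin n) (Fin r₁) ℝ}
    {U₂ : Matrix (Fin m) (Fin r₂) ℝ} {V₂ : Matrix (Fin n) (Fin r₂) ℝ}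
    (hU₁ : U₁ᵀ * U₁ = 1) (hV₁ : V₁ᵀ * V₁ = 1) (hU₂ : U₂ᵀ * U₂ = 1) (hV₂ : V₂ᵀ * V₂ = 1)
    {x : Fin r₁ → ℝ} {y : Fin r₂ → ℝ} (hx : ∀ i, 0 ≤ x i) (hy : ∀ j, 0 ≤ y j)
    {g : ℝ → ℝ} (hg : LipschitzWith 1 g) (hg_nonneg : ∀ t, 0 ≤ g t)
    (hg_le : ∀ t, 0 ≤ t → g t ≤ t) :
    frobSq (U₁ * diagonal (fun i => g (x i)) * V₁ᵀ - U₂ * diagonal (fun j => g (y j)) * V₂ᵀ) ≤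
      frobSq (U₁ * diagonal x * V₁ᵀ - U₂ * diagonal y * V₂ᵀ) := by
  set P := (U₁ᵀ * U₂) ⊙ (V₁ᵀ * V₂)
  have hrow : ∀ i, ∑ j, |P i j| ≤ 1 := sum_abs_hadamard_transpose_mul_le_one hU₁ hV₁ hU₂ hV₂
  have hcol : ∀ j, ∑ i, |P i j| ≤ 1 := by
    have hPt : (U₂ᵀ * U₁) ⊙ (V₂ᵀ * V₁) = Pᵀ := by
      simp only [P, transpose_hadamard, transpose_mul, transpose_transpose]
    simpa only [hPt, transpose_apply] using sum_abs_hadamard_transpose_mul_le_one hU₂ hV₂ hU₁ hV₁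
  have hsq : ∀ a b, (g a - g b) ^ 2 ≤ (a - b) ^ 2 := fun a b =>
    sq_le_sq.mpr (by simpa [Real.dist_eq] using hg.dist_le_mul a b)
  have key := two_mul_sum_mul_le_of_sum_abs_le_one
    (c := fun i j => x i * y j - g (x i) * g (y j))
    (e := fun i => x i ^ 2 - g (x i) ^ 2) (f := fun j => y j ^ 2 - g (y j) ^ 2)
    (fun i => by nlinarith [hg_nonneg (x i), hg_le _ (hx i)])
    (fun j => by nlinarith [hg_nonneg (y j), hg_le _ (hy j)])
    (fun i j => by
      nlinarith [mul_le_mul (hg_le _ (hx i)) (hg_le _ (hy j)) (hg_nonneg _) (hx i)])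
    (fun i j => by nlinarith [hsq (x i) (y j)]) hrow hcol
  simp only [sub_mul, Finset.sum_sub_distrib] at key
  rw [frobSq_svd_sub hU₁ hV₁ hU₂ hV₂, frobSq_svd_sub hU₁ hV₁ hU₂ hV₂]
  linarith

theorem lipschitzWith_max_sub_const_zero (lam : ℝ) :
    LipschitzWith 1 fun t : ℝ => max (t - lam) 0 :=
  LipschitzWith.of_dist_le_mul fun a b => by
    simpa [Real.dist_eq] using abs_max_sub_max_le_abs (a - lam) (b - lam) 0

/-- singular value soft-thresholding is non-expansive in the
Frobenius norm. -/
theorem soft_threshold_nonexpansive {m n r₁ r₂ : ℕ}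
    (W₁ W₂ : Matrix (Fin m) (Fin n) ℝ)
    (U₁ : Matrix (Fin m) (Fin r₁) ℝ) (d₁ : Fin r₁ → ℝ) (V₁ : Matrix (Fin n) (Fin r₁) ℝ)
    (U₂ : Matrix (Fin m) (Fin r₂) ℝ) (d₂ : Fin r₂ → ℝ) (V₂ : Matrix (Fin n) (Fin r₂) ℝ)
    (lam : ℝ) (hlam : 0 ≤ lam)
    (h₁ : IsSVD W₁ U₁ d₁ V₁) (h₂ : IsSVD W₂ U₂ d₂ V₂) :
    frobSq (U₁ * Matrix.diagonal (fun i => max (d₁ i - lam) 0) * V₁ᵀ -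
        U₂ * Matrix.diagonal (fun i => max (d₂ i - lam) 0) * V₂ᵀ) ≤
      frobSq (W₁ - W₂) := by
  obtain ⟨hU₁, hV₁, hd₁, rfl⟩ := h₁
  obtain ⟨hU₂, hV₂, hd₂, rfl⟩ := h₂
  exact frobSq_svd_map_sub_le hU₁ hV₁ hU₂ hV₂ (fun i => (hd₁ i).le) (fun j => (hd₂ j).le)
    (g := fun t => max (t - lam) 0) (lipschitzWith_max_sub_const_zero lam)
    (fun _ => le_max_right _ _) (fun t ht => max_le (by linarith) ht)
end

section
/- The Soft-Impute iterates satisfy the sandwich inequality: if Z^{k+1} = argmin_Z Q_λ(Z | Z^k), then f_λ(Z^{k+1}) ≤ Q_λ(Z^{k+1} | Z^k) ≤ f_λ(Z^k). In particular the sequence f_λ(Z^k) is monotonically non-increasing. -/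
open Matrix BigOperators Finset

/-!
`Q_λ(· | Z̃)` majorizes `f_λ` and touches it at `Z̃`: the two quadratic parts differ exactly by
`½‖P_Ω^⊥(Z̃ - Z)‖_F²`. Hence `f_λ(Z^{k+1}) ≤ Q_λ(Z^{k+1} | Z^k)`, and minimality of `Z^{k+1}` gives
`Q_λ(Z^{k+1} | Z^k) ≤ Q_λ(Z^k | Z^k) = f_λ(Z^k)`.
-/

section

variable {m n : ℕ} (Ω : Finset (Fin m × Fin n)) (X : Matrix (Fin m) (Fin n) ℝ) (lam : ℝ)

lemma frobSq_nonneg (A : Matrix (Fin m) (Fin n) ℝ) : 0 ≤ frobSq A :=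
  Finset.sum_nonneg fun _ _ => Finset.sum_nonneg fun _ _ => sq_nonneg _

lemma pOc_zero : pOc Ω (0 : Matrix (Fin m) (Fin n) ℝ) = 0 := by
  ext i j
  simp [pOc, pO]

lemma frobSq_zero : frobSq (0 : Matrix (Fin m) (Fin n) ℝ) = 0 := by
  simp [frobSq]

lemma frobSq_pO_add_pOc_sub (Z Zt : Matrix (Fin m) (Fin n) ℝ) :
    frobSq (pO Ω X + pOc Ω Zt - Z) = frobSq (pO Ω Z - pO Ω X) + frobSq (pOc Ω (Zt - Z)) := by
  simp only [frobSq, ← Finset.sum_add_distrib]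
  refine Finset.sum_congr rfl fun i _ => Finset.sum_congr rfl fun j _ => ?_
  by_cases h : (i, j) ∈ Ω
  · simp only [pO, pOc, h, if_true, Matrix.add_apply, Matrix.sub_apply, sub_self]
    ring
  · simp [pO, pOc, h]

lemma qObj_eq_fObj_add (Z Zt : Matrix (Fin m) (Fin n) ℝ) :
    qObj Ω X lam Z Zt = fObj Ω X lam Z + 1 / 2 * frobSq (pOc Ω (Zt - Z)) := by
  rw [qObj, fObj, frobSq_pO_add_pOc_sub]
  ring

lemma fObj_le_qObj (Z Zt : Matrix (Fin m) (Fin n) ℝ) :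
    fObj Ω X lam Z ≤ qObj Ω X lam Z Zt := by
  rw [qObj_eq_fObj_add]
  linarith [frobSq_nonneg (pOc Ω (Zt - Z))]

lemma qObj_self (Z : Matrix (Fin m) (Fin n) ℝ) : qObj Ω X lam Z Z = fObj Ω X lam Z := by
  rw [qObj_eq_fObj_add, sub_self, pOc_zero, frobSq_zero, mul_zero, add_zero]

end

theorem soft_impute_sandwich_general {m n : ℕ} (Ω : Finset (Fin m × Fin n))
    (X : Matrix (Fin m) (Fin n) ℝ) (lam : ℝ)
    (Z : ℕ → Matrix (Fin m) (Fin n) ℝ)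
    (hmin : ∀ k, ∀ Z' : Matrix (Fin m) (Fin n) ℝ,
      qObj Ω X lam (Z (k + 1)) (Z k) ≤ qObj Ω X lam Z' (Z k)) :
    ∀ k, fObj Ω X lam (Z (k + 1)) ≤ qObj Ω X lam (Z (k + 1)) (Z k) ∧
      qObj Ω X lam (Z (k + 1)) (Z k) ≤ fObj Ω X lam (Z k) ∧
      fObj Ω X lam (Z (k + 1)) ≤ fObj Ω X lam (Z k) := by
  intro k
  have hf_le_q := fObj_le_qObj Ω X lam (Z (k + 1)) (Z k)
  have hq_le_f : qObj Ω X lam (Z (k + 1)) (Z k) ≤ fObj Ω X lam (Z k) :=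
    (hmin k (Z k)).trans_eq (qObj_self Ω X lam (Z k))
  exact ⟨hf_le_q, hq_le_f, hf_le_q.trans hq_le_f⟩

/-- sandwich inequality for the Soft-Impute iterates, and in
particular monotone non-increase of `f_λ(Z^k)`. -/
theorem soft_impute_sandwich {m n : ℕ} (Ω : Finset (Fin m × Fin n))
    (X : Matrix (Fin m) (Fin n) ℝ) (lam : ℝ) (hlam : 0 ≤ lam)
    (Z : ℕ → Matrix (Fin m) (Fin n) ℝ) (h0 : Z 0 = 0)
    (hmin : ∀ k, ∀ Z' : Matrix (Fin m) (Fin n) ℝ,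
      qObj Ω X lam (Z (k + 1)) (Z k) ≤ qObj Ω X lam Z' (Z k)) :
    ∀ k, fObj Ω X lam (Z (k + 1)) ≤ qObj Ω X lam (Z (k + 1)) (Z k) ∧
      qObj Ω X lam (Z (k + 1)) (Z k) ≤ fObj Ω X lam (Z k) ∧
      fObj Ω X lam (Z (k + 1)) ≤ fObj Ω X lam (Z k) :=
  soft_impute_sandwich_general Ω X lam Z hmin
end
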